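/- arXiv:2305.07321 — 3 statements merged into one kernel-verified Lean document; each statement's English description precedes it below -/
import Mathlib

section
/- Let T be a tree on ℕ and let X be a fixed point of Γ_T. Then X = S_X, the set T ∖ X is closed under taking initial segments, and T ∖ X has no endnode: every σ ∈ T ∖ X has some n ∈ ℕ with σ ++ [n] ∈ T ∖ X. -/
/-- A tree on ℕ: a set of finite sequences closed under taking initial segments. -/
def IsTree (T : Set (List ℕ)) : Prop :=
  ∀ σ ∈ T, ∀ τ : List ℕ, τ <+: σ → τ ∈ T

/-- `SX X` = the set of sequences having some element of `X` as an initial segment. -/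
def SX (X : Set (List ℕ)) : Set (List ℕ) :=
  {σ | ∃ τ ∈ X, τ <+: σ}

/-- `σ` is an endnode of `A` if `σ ∈ A` and no one-step extension of `σ` is in `A`. -/
def IsEndnode (A : Set (List ℕ)) (σ : List ℕ) : Prop :=
  σ ∈ A ∧ ∀ n : ℕ, σ ++ [n] ∉ A

/-- The operator `Γ_T`. -/
def Gam (T X : Set (List ℕ)) : Set (List ℕ) :=
  SX X ∪ {σ | ∃ τ : List ℕ, τ <+: σ ∧ IsEndnode (T \ SX X) τ}

/-- `restrict f n = [f 0, …, f (n-1)]`. -/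
def restrict (f : ℕ → ℕ) (n : ℕ) : List ℕ :=
  List.ofFn fun i : Fin n => f i

/-- `f` is a path of the tree `T`. -/
def IsPath (T : Set (List ℕ)) (f : ℕ → ℕ) : Prop :=
  ∀ n, restrict f n ∈ T

/-- `f` is lexicographically smaller than `g`. -/
def LexLt (f g : ℕ → ℕ) : Prop :=
  ∃ n, restrict f n = restrict g n ∧ f n < g n

/-- `f = g` or `f <_l g`. -/
def LexLe (f g : ℕ → ℕ) : Prop := f = g ∨ LexLt f g

theorem stmt2 (T : Set (List ℕ)) (hT : IsTree T) (X : Set (List ℕ))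
    (hX : Gam T X = X) :
    X = SX X ∧ IsTree (T \ X) ∧
    ∀ σ ∈ T \ X, ∃ n : ℕ, σ ++ [n] ∈ T \ X := by
  have noend : ∀ τ : List ℕ, ¬ IsEndnode (T \ SX X) τ := by
    intro τ h
    have hτX : τ ∈ X := by
      rw [← hX]; right; exact ⟨τ, List.prefix_refl τ, h⟩
    exact h.1.2 ⟨τ, hτX, List.prefix_refl τ⟩
  have hXS : X = SX X := by
    ext σ
    constructor
    · intro hσ
      rw [← hX] at hσ
      rcases hσ with h | ⟨τ, _, hend⟩
      · exact h
      · exact absurd hend (noend τ)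
    · intro hσ; rw [← hX]; left; exact hσ
  refine ⟨hXS, ?_, ?_⟩
  · rintro σ ⟨hσT, hσX⟩ τ hpre
    refine ⟨hT σ hσT τ hpre, ?_⟩
    intro hτX
    apply hσX
    rw [hXS] at hτX ⊢
    obtain ⟨ρ, hρ, hρp⟩ := hτX
    exact ⟨ρ, hρ, hρp.trans hpre⟩
  · intro σ hσ
    rw [hXS] at hσ ⊢
    by_contra hc
    push_neg at hc
    exact noend σ ⟨hσ, fun n h => hc n h⟩
end

section
/- Let T be a tree on ℕ, let X be a fixed point of Γ_T, and let f be a path of T. Then X ∖ {f↾n : n ∈ ℕ} is also a fixed point of Γ_T. -/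
@[simp] lemma restrict_length (f : ℕ → ℕ) (n : ℕ) : (restrict f n).length = n := by
  simp [restrict]

lemma restrict_succ (f : ℕ → ℕ) (m : ℕ) :
    restrict f (m+1) = restrict f m ++ [f m] := by
  rw [restrict, List.ofFn_succ']
  simp [restrict, List.concat_eq_append]

lemma take_restrict (f : ℕ → ℕ) {m n : ℕ} (h : m ≤ n) :
    (restrict f n).take m = restrict f m := by
  apply List.ext_getElem
  · simp [restrict]; omega
  · intro i h1 h2
    simp [restrict, List.getElem_take]

lemma prefix_restrict {f : ℕ → ℕ} {n : ℕ} {τ : List ℕ} (h : τ <+: restrict f n) :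
    τ = restrict f τ.length := by
  have hl : τ.length ≤ n := by
    have := h.length_le; simpa [restrict] using this
  conv_lhs => rw [List.prefix_iff_eq_take.mp h, take_restrict f hl]

theorem stmt3 (T : Set (List ℕ)) (hT : IsTree T) (X : Set (List ℕ))
    (hX : Gam T X = X) (f : ℕ → ℕ) (hf : IsPath T f) :
    Gam T (X \ Set.range (restrict f)) = X \ Set.range (restrict f) := by
  set R : Set (List ℕ) := Set.range (restrict f) with hR
  set Y : Set (List ℕ) := X \ R with hY
  -- SX X = X
  have hSX : SX X = X := by
    apply Set.Subset.antisymm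
    · intro σ hσ; rw [← hX]; exact Or.inl hσ
    · intro σ hσ; exact ⟨σ, hσ, List.prefix_refl σ⟩
  -- SX Y = Y
  have hSY : SX Y = Y := by
    apply Set.Subset.antisymm
    · rintro σ ⟨τ, ⟨hτX, hτR⟩, hpre⟩
      constructor
      · rw [← hSX]; exact ⟨τ, hτX, hpre⟩
      · rintro ⟨n, rfl⟩
        exact hτR ⟨τ.length, (prefix_restrict hpre).symm⟩
    · intro σ hσ; exact ⟨σ, hσ, List.prefix_refl σ⟩
  apply Set.Subset.antisymm
  · rintro σ (hσ | ⟨τ, hpre, ⟨hτT, hτY⟩, hext⟩)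
    · rwa [hSY] at hσ
    rw [hSY] at hτY hext
    -- τ is not of the form restrict f m
    have hτR : τ ∉ R := by
      rintro ⟨m, rfl⟩
      have h1 : restrict f m ++ [f m] ∈ T := by
        rw [← restrict_succ]; exact hf (m + 1)
      have h2 := hext (f m)
      rw [Set.mem_diff] at h2
      push_neg at h2
      exact (h2 h1).2 ⟨m + 1, restrict_succ f m⟩
    have hτX : τ ∉ X := fun h => hτY ⟨h, hτR⟩
    constructor
    · -- σ ∈ X : τ is an endnode of T \ SX X
      rw [← hX]
      refine Or.inr ⟨τ, hpre, ⟨⟨hτT, ?_⟩, ?_⟩⟩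
      · rw [hSX]; exact hτX
      · intro n hn
        rw [hSX] at hn
        have := hext n
        rw [Set.mem_diff] at this
        push_neg at this
        exact hn.2 (this hn.1).1
    · rintro ⟨n, rfl⟩
      exact hτR ⟨τ.length, (prefix_restrict hpre).symm⟩
  · intro σ hσ; left; rw [hSY]; exact hσ
end

section
/- Let ⟨T_l⟩_{l∈ℕ} be a sequence of trees on ℕ, and for each l let T'_l = {0 :: σ : σ ∈ T_l} ∪ {the constant-1 sequence of length n : n ∈ ℕ}. Then the constant function with value 1 is a path of the product tree S(⟨T'_l⟩). Moreover, if g is a path of S(⟨T'_l⟩), l₀ ∈ ℕ satisfies g(⟨l₀,0⟩) = 1, and h is a path of T_{l₀}, then the function g' defined by g'(⟨l₀,0⟩) = 0, g'(⟨l₀,n+1⟩) = h(n), and g'(⟨l,n⟩) = g(⟨l,n⟩) for all l ≠ l₀, is a path of S(⟨T'_l⟩) with g' <_l g. -/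
/-- `σ_l = [σ(⟨l,0⟩), …, σ(⟨l,m⟩)]` where `m` is largest with `⟨l,m⟩ < |σ|`. -/
def sect (σ : List ℕ) (l : ℕ) : List ℕ :=
  ((List.range σ.length).filter fun n => Nat.pair l n < σ.length).map
    fun n => σ.getD (Nat.pair l n) 0

/-- The product tree `S(⟨T_l⟩) = {σ : σ_l ∈ T_l for every l}`. -/
def prodTree (T : ℕ → Set (List ℕ)) : Set (List ℕ) :=
  {σ | ∀ l, sect σ l ∈ T l}

/-- `T' = {0 :: σ : σ ∈ T} ∪ {constant-1 sequences}`. -/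
def succTree (T : Set (List ℕ)) : Set (List ℕ) :=
  {τ | ∃ σ ∈ T, τ = 0 :: σ} ∪ {τ | ∃ n : ℕ, τ = List.replicate n 1}

lemma pair_le_pair_right (l : ℕ) {a b : ℕ} (h : a ≤ b) :
    Nat.pair l a ≤ Nat.pair l b := by
  rcases h.lt_or_eq with h | h
  · exact (Nat.pair_lt_pair_right l h).le
  · simp [h]

lemma range_filter_lt (n k : ℕ) (hk : k ≤ n) :
    (List.range n).filter (fun m => decide (m < k)) = List.range k := by
  induction n with
  | zero =>
    have : k = 0 := Nat.le_zero.mp hk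
    simp [this]
  | succ n ih =>
    rw [List.range_succ, List.filter_append]
    rcases Nat.lt_or_ge k (n + 1) with h | h
    · have hk' : k ≤ n := by omega
      rw [ih hk']
      simp [Nat.not_lt.mpr hk']
    · have hk' : k = n + 1 := by omega
      subst hk'
      rw [List.filter_eq_self.2 (by intro a ha; simp at ha ⊢; omega)]
      simp [List.range_succ]

lemma sect_restrict (f : ℕ → ℕ) (n l : ℕ) :
    ∃ k, (∀ m, Nat.pair l m < n ↔ m < k) ∧
      sect (restrict f n) l = restrict (fun m => f (Nat.pair l m)) k := by
  have hex : ∃ m, n ≤ Nat.pair l m := ⟨n, Nat.right_le_pair l n⟩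
  set k := Nat.find hex with hkdef
  have hiff : ∀ m, Nat.pair l m < n ↔ m < k := by
    intro m
    constructor
    · intro hm
      by_contra hmk
      push_neg at hmk
      have h1 := Nat.find_spec hex
      rw [← hkdef] at h1
      have h2 : Nat.pair l k ≤ Nat.pair l m := pair_le_pair_right l hmk
      omega
    · intro hm
      have := Nat.find_min hex hm
      omega
  refine ⟨k, hiff, ?_⟩
  have hlen : (restrict f n).length = n := by simp [restrict]
  have hkn : k ≤ n := by
    by_contra hc
    push_neg at hc
    have h1 := (hiff n).2 hc
    have h2 := Nat.right_le_pair l n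
    omega
  unfold sect
  rw [hlen]
  have hfil : (List.range n).filter (fun m => decide (Nat.pair l m < n)) = List.range k := by
    rw [List.filter_congr (q := fun m => decide (m < k)) (fun m _ => by simp [hiff m])]
    exact range_filter_lt n k hkn
  rw [hfil]
  apply List.ext_getElem
  · simp [restrict]
  · intro i h1 h2
    have hi : i < k := by simpa using h1
    have hpi : Nat.pair l i < n := (hiff i).2 hi
    simp only [List.getElem_map, List.getElem_range, restrict, List.getElem_ofFn]
    rw [List.getD_eq_getElem _ _ (by simpa [restrict, hlen] using hpi)]
    simp [restrict]

lemma sect_restrict_pair (f : ℕ → ℕ) (l k : ℕ) :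
    sect (restrict f (Nat.pair l k)) l = restrict (fun m => f (Nat.pair l m)) k := by
  obtain ⟨k', hiff, heq⟩ := sect_restrict f (Nat.pair l k) l
  have hkk : k' = k := by
    have h1 : ∀ m, Nat.pair l m < Nat.pair l k ↔ m < k := by
      intro m
      constructor
      · intro hm
        by_contra hc
        push_neg at hc
        exact absurd (pair_le_pair_right l hc) (by omega)
      · exact Nat.pair_lt_pair_right l
    have h2 := (h1 k').symm.trans (hiff k')
    have h3 := (h1 k).symm.trans (hiff k)
    omega
  rw [heq, hkk]

theorem stmt12 (T : ℕ → Set (List ℕ)) (hT : ∀ l, IsTree (T l)) :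
    IsPath (prodTree fun l => succTree (T l)) (fun _ => 1) ∧
    ∀ g : ℕ → ℕ, IsPath (prodTree fun l => succTree (T l)) g →
      ∀ l₀ : ℕ, g (Nat.pair l₀ 0) = 1 →
      ∀ h : ℕ → ℕ, IsPath (T l₀) h →
      ∀ g' : ℕ → ℕ,
        g' (Nat.pair l₀ 0) = 0 →
        (∀ n, g' (Nat.pair l₀ (n + 1)) = h n) →
        (∀ l, l ≠ l₀ → ∀ n, g' (Nat.pair l n) = g (Nat.pair l n)) →
        IsPath (prodTree fun l => succTree (T l)) g' ∧ LexLt g' g := by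
  constructor
  · intro n l
    obtain ⟨k, -, heq⟩ := sect_restrict (fun _ => 1) n l
    rw [heq]
    right
    exact ⟨k, by simp [restrict, List.ofFn_const]⟩
  · intro g hg l₀ hg1 h hh g' hg'0 hg's hg'o
    constructor
    · intro n l
      obtain ⟨k, -, heq⟩ := sect_restrict g' n l
      rw [heq]
      by_cases hl : l = l₀
      · subst hl
        cases k with
        | zero => right; exact ⟨0, by simp [restrict]⟩
        | succ k =>
          left
          refine ⟨restrict h k, hh k, ?_⟩
          rw [restrict, List.ofFn_succ]
          simp only [Fin.val_zero, Fin.val_succ]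
          rw [hg'0]
          congr 1
          simp only [restrict]
          congr 1
          funext i
          exact hg's i
      · have hsame : restrict (fun m => g' (Nat.pair l m)) k
            = restrict (fun m => g (Nat.pair l m)) k := by
          simp only [restrict]
          congr 1
          funext i
          exact hg'o l hl i
        rw [hsame, ← sect_restrict_pair g l k]
        exact hg (Nat.pair l k) l
    · refine ⟨Nat.pair l₀ 0, ?_, by omega⟩
      apply List.ext_getElem
      · simp [restrict]
      · intro i h1 h2
        simp only [restrict, List.getElem_ofFn]
        have hlt : i < Nat.pair l₀ 0 := by simpa [restrict] using h1
        have hun : Nat.pair (Nat.unpair i).1 (Nat.unpair i).2 = i := Nat.pair_unpair i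
        by_cases hl : (Nat.unpair i).1 = l₀
        · exfalso
          rw [← hun, hl] at hlt
          have := pair_le_pair_right l₀ (Nat.zero_le (Nat.unpair i).2)
          omega
        · rw [← hun]
          exact hg'o _ hl _
end
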